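/- arXiv:2311.09903 — 6 statements merged into one kernel-verified Lean document; each statement's English description precedes it below -/
import Mathlib

section
/- Let g₁,…,g_k be distinct elements of a finite abelian group G and let m ∈ B(g₁,…,g_k) be a group atom (i.e., m is not an integral linear combination of elements of B(g₁,…,g_k) of length strictly smaller than |m|) with |m| > max{ord(gᵢ) : i = 1,…,k}. Then |m| ≤ |m*|, where m* = Σᵢ ord(gᵢ)eᵢ − m. -/
open Finset

/-- Membership in the block monoid `B(g₁,…,g_k)`. -/
def IsBlock {G : Type*} [AddCommGroup G] {k : ℕ} (g : Fin k → G)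
    (m : Fin k → ℕ) : Prop :=
  ∑ i, (m i) • g i = 0

/-- The length `|m| = ∑ᵢ mᵢ`. -/
def blockLen {k : ℕ} (m : Fin k → ℕ) : ℕ := ∑ i, m i

/-- `m` is an atom of the block monoid: nonzero, and not the sum of two
nonzero elements of the monoid. -/
def IsBlockAtom {G : Type*} [AddCommGroup G] {k : ℕ} (g : Fin k → G)
    (m : Fin k → ℕ) : Prop :=
  IsBlock g m ∧ m ≠ 0 ∧
    ∀ a b : Fin k → ℕ, IsBlock g a → IsBlock g b → m = a + b → a = 0 ∨ b = 0

/-- `m` is a group atom: it belongs to the block monoid and cannot be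
written as an integral linear combination of elements of the block monoid
of length strictly smaller than `|m|`. -/
def IsGroupAtom {G : Type*} [AddCommGroup G] {k : ℕ} (g : Fin k → G)
    (m : Fin k → ℕ) : Prop :=
  IsBlock g m ∧
    ¬ ∃ (T : Finset (Fin k → ℕ)) (c : (Fin k → ℕ) → ℤ),
        (∀ b ∈ T, IsBlock g b ∧ blockLen b < blockLen m) ∧
        (∀ i, (m i : ℤ) = ∑ b ∈ T, c b * (b i))

/-- A group atom cannot be an integer combination (indexed by any fintype)
of shorter blocks. -/
lemma groupAtom_not_combo {G : Type*} [AddCommGroup G] {k : ℕ} {g : Fin k → G}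
    {m : Fin k → ℕ} (hm : IsGroupAtom g m) {α : Type*} [Fintype α]
    (f : α → (Fin k → ℕ)) (d : α → ℤ)
    (hf : ∀ a, IsBlock g (f a) ∧ blockLen (f a) < blockLen m)
    (heq : ∀ i, (m i : ℤ) = ∑ a, d a * f a i) : False := by
  classical
  apply hm.2
  refine ⟨Finset.univ.image f,
    fun b => ∑ a ∈ Finset.univ.filter (fun a => f a = b), d a, ?_, ?_⟩
  · intro b hb
    obtain ⟨a, _, rfl⟩ := Finset.mem_image.mp hb
    exact hf a
  · intro i
    rw [heq i, ← Finset.sum_fiberwise_of_maps_to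
      (fun a _ => Finset.mem_image_of_mem f (Finset.mem_univ a))
      (fun a => d a * f a i)]
    refine Finset.sum_congr rfl fun b hb => ?_
    rw [Finset.sum_mul]
    refine Finset.sum_congr rfl fun a ha => ?_
    rw [(Finset.mem_filter.mp ha).2]

theorem len_le_len_star {G : Type*} [AddCommGroup G] [Fintype G]
    {k : ℕ} (g : Fin k → G) (hg : Function.Injective g)
    (m : Fin k → ℕ) (hm : IsGroupAtom g m)
    (hbig : ∀ i, addOrderOf (g i) < blockLen m) :
    blockLen m ≤ blockLen (fun i => addOrderOf (g i) - m i) := by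
  classical
  by_contra hlt
  push_neg at hlt
  -- the scaled basis vectors ord(gⱼ)·eⱼ
  set E : Fin k → (Fin k → ℕ) := fun j i => if i = j then addOrderOf (g j) else 0
    with hE
  have hE_block : ∀ j, IsBlock g (E j) := by
    intro j
    unfold IsBlock
    have : ∀ i, E j i • g i = if i = j then addOrderOf (g j) • g j else 0 := by
      intro i
      by_cases h : i = j <;> simp [hE, h]
    simp only [this, Finset.sum_ite_eq' Finset.univ j, Finset.mem_univ, if_true]
    exact addOrderOf_nsmul_eq_zero (g j)
  have hE_len : ∀ j, blockLen (E j) = addOrderOf (g j) := by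
    intro j
    simp [blockLen, hE, Finset.sum_ite_eq' Finset.univ j]
  have hord_pos : ∀ j, 0 < addOrderOf (g j) := fun j => addOrderOf_pos (g j)
  -- Step 1: mᵢ ≤ ord(gᵢ)
  have hle : ∀ i, m i ≤ addOrderOf (g i) := by
    by_contra h
    push_neg at h
    obtain ⟨i0, hi0⟩ := h
    set m' : Fin k → ℕ := fun j => m j - E i0 j with hm'
    have hδle : ∀ j, E i0 j ≤ m j := by
      intro j
      by_cases hj : j = i0
      · subst hj; simp [hE, hi0.le]
      · simp [hE, hj]
    have hsum : ∀ j, m' j + E i0 j = m j := fun j => Nat.sub_add_cancel (hδle j)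
    have hm'_block : IsBlock g m' := by
      have key : ∑ i, m' i • g i + ∑ i, E i0 i • g i = ∑ i, m i • g i := by
        rw [← Finset.sum_add_distrib]
        refine Finset.sum_congr rfl fun i _ => ?_
        rw [← add_nsmul, hsum]
      have h1 := hm.1
      unfold IsBlock at h1 ⊢
      have h2 := hE_block i0
      unfold IsBlock at h2
      rw [h2, add_zero] at key
      rw [key, h1]
    have hm'_len : blockLen m' + addOrderOf (g i0) = blockLen m := by
      unfold blockLen
      rw [← hE_len i0]
      unfold blockLen
      rw [← Finset.sum_add_distrib]
      exact Finset.sum_congr rfl fun j _ => hsum j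
    have hm'_lt : blockLen m' < blockLen m := by
      have := hord_pos i0
      omega
    refine groupAtom_not_combo hm (α := Bool)
      (fun b => if b then m' else E i0) (fun _ => 1) ?_ ?_
    · intro a
      cases a
      · refine ⟨hE_block i0, ?_⟩
        show blockLen (E i0) < blockLen m
        rw [hE_len i0]; exact hbig i0
      · simpa using ⟨hm'_block, hm'_lt⟩
    · intro i
      rw [Fintype.sum_bool]
      simp only [if_true, if_false, one_mul]
      have := hsum i
      have h2 := hδle i
      push_cast [hm', Nat.cast_sub h2]
      ring
  -- Step 2: m = Σⱼ ord(gⱼ)eⱼ − m*, a combination of shorter blocks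
  set ms : Fin k → ℕ := fun i => addOrderOf (g i) - m i with hms
  have hms_block : IsBlock g ms := by
    have key : ∑ i, ms i • g i + ∑ i, m i • g i = ∑ i, E i i • g i := by
      rw [← Finset.sum_add_distrib]
      refine Finset.sum_congr rfl fun i _ => ?_
      rw [← add_nsmul]
      have : ms i + m i = addOrderOf (g i) := Nat.sub_add_cancel (hle i)
      rw [this]
      simp [hE]
    have h1 := hm.1
    unfold IsBlock at h1 ⊢
    rw [h1, add_zero] at key
    rw [key]
    have : ∀ i : Fin k, E i i • g i = (0 : G) := by
      intro i
      simp [hE, addOrderOf_nsmul_eq_zero]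
    simp [this]
  refine groupAtom_not_combo hm (α := Option (Fin k))
    (fun a => a.elim ms E) (fun a => a.elim (-1) (fun _ => 1)) ?_ ?_
  · intro a
    cases a with
    | none => exact ⟨hms_block, hlt⟩
    | some j =>
      refine ⟨hE_block j, ?_⟩
      show blockLen (E j) < blockLen m
      rw [hE_len j]; exact hbig j
  · intro i
    rw [Fintype.sum_option]
    simp only [Option.elim]
    have hsumE : ∑ j, (1 : ℤ) * (E j i : ℤ) = (addOrderOf (g i) : ℤ) := by
      have : ∀ j, (1 : ℤ) * (E j i : ℤ) = if j = i then (addOrderOf (g i) : ℤ) else 0 := by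
        intro j
        by_cases h : j = i
        · subst h; simp [hE]
        · have : i ≠ j := fun hij => h hij.symm
          simp [hE, this, h]
      rw [Finset.sum_congr rfl fun j _ => this j]
      simp
    rw [hsumE]
    have := hle i
    push_cast [hms, Nat.cast_sub this]
    ring
end

section
/- Let g₁,…,g_k be distinct elements of a finite abelian group G and let m ∈ B(g₁,…,g_k) be a group atom with |m| > max{ord(gᵢ) : i = 1,…,k}. Then 2|m| ≤ Σᵢ₌₁^k ord(gᵢ). -/
open Finset

section Aux

set_option linter.unusedSectionVars false

variable {G : Type*} [AddCommGroup G] [Fintype G] {k : ℕ}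

/-- `ord(gⱼ)` copies of `gⱼ` form a block. -/
lemma isBlock_single (g : Fin k → G) (j : Fin k) :
    IsBlock g (Pi.single j (addOrderOf (g j))) := by
  unfold IsBlock
  rw [Finset.sum_eq_single j]
  · simp [addOrderOf_nsmul_eq_zero]
  · intro i _ hij; simp [Pi.single_apply, hij]
  · simp

lemma blockLen_single (j : Fin k) (n : ℕ) :
    blockLen (Pi.single j n : Fin k → ℕ) = n := by
  simp [blockLen, Pi.single_apply]

/-- If `m` and `b` are blocks and `m = a + b` componentwise, then `a` is a block. -/
lemma isBlock_of_add (g : Fin k → G) {a b m : Fin k → ℕ}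
    (hm : IsBlock g m) (hb : IsBlock g b) (hab : ∀ i, m i = a i + b i) :
    IsBlock g a := by
  unfold IsBlock at *
  have h : ∑ i, m i • g i = ∑ i, a i • g i + ∑ i, b i • g i := by
    rw [← Finset.sum_add_distrib]
    exact Finset.sum_congr rfl fun i _ => by rw [hab i, add_nsmul]
  rw [hm, hb, add_zero] at h
  exact h.symm

lemma blockLen_add {a b m : Fin k → ℕ} (hab : ∀ i, m i = a i + b i) :
    blockLen m = blockLen a + blockLen b := by
  unfold blockLen
  rw [← Finset.sum_add_distrib]
  exact Finset.sum_congr rfl fun i _ => hab i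

/-- Every component of a group atom of big length is strictly smaller than the
corresponding order. -/
lemma comp_lt (g : Fin k → G) (m : Fin k → ℕ) (hm : IsGroupAtom g m)
    (hbig : ∀ i, addOrderOf (g i) < blockLen m) (i : Fin k) :
    m i < addOrderOf (g i) := by
  by_contra h
  push_neg at h
  set d := addOrderOf (g i) with hd
  have hdpos : 0 < d := addOrderOf_pos (g i)
  set b : Fin k → ℕ := Pi.single i d with hbdef
  set a : Fin k → ℕ := fun j => m j - b j with hadef
  have hab : ∀ j, m j = a j + b j := by
    intro j
    by_cases hji : j = i
    · subst hji; simp [hadef, hbdef, Pi.single_apply]; omega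
    · simp [hadef, hbdef, Pi.single_apply, hji]
  have hblkb : IsBlock g b := isBlock_single g i
  have hblka : IsBlock g a := isBlock_of_add g hm.1 hblkb hab
  have hlenb : blockLen b = d := blockLen_single i d
  have hlen : blockLen m = blockLen a + blockLen b := blockLen_add hab
  have hlta : blockLen a < blockLen m := by
    have := hbig i; omega
  have hltb : blockLen b < blockLen m := by
    have := hbig i; omega
  apply hm.2
  by_cases hab2 : a = b
  · refine ⟨{a}, fun _ => 2, ?_, ?_⟩
    · intro x hx; simp at hx; subst hx; exact ⟨hblka, hlta⟩
    · intro i'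
      rw [Finset.sum_singleton]
      have := hab i'
      rw [← hab2] at this
      push_cast [this]; ring
  · refine ⟨{a, b}, fun _ => 1, ?_, ?_⟩
    · intro x hx
      simp at hx
      rcases hx with rfl | rfl
      · exact ⟨hblka, hlta⟩
      · exact ⟨hblkb, hltb⟩
    · intro i'
      rw [Finset.sum_pair hab2]
      have := hab i'
      push_cast [this]; ring

end Aux

theorem two_len_le_sum_orders {G : Type*} [AddCommGroup G] [Fintype G]
    {k : ℕ} (g : Fin k → G) (hg : Function.Injective g)
    (m : Fin k → ℕ) (hm : IsGroupAtom g m)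
    (hbig : ∀ i, addOrderOf (g i) < blockLen m) :
    2 * blockLen m ≤ ∑ i, addOrderOf (g i) := by
  by_contra hcon
  push_neg at hcon
  have hlt : ∀ i, m i < addOrderOf (g i) := comp_lt g m hm hbig
  set s : Fin k → (Fin k → ℕ) := fun j => Pi.single j (addOrderOf (g j)) with hs
  set m' : Fin k → ℕ := fun i => addOrderOf (g i) - m i with hm'
  have hfull : IsBlock g (fun i => addOrderOf (g i)) := by
    simp [IsBlock, addOrderOf_nsmul_eq_zero]
  have habf : ∀ i, (fun i => addOrderOf (g i)) i = m' i + m i := by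
    intro i; simp only [hm']; have := hlt i; omega
  have hblkm' : IsBlock g m' := isBlock_of_add g hfull hm.1 habf
  have hlenfull : blockLen (fun i => addOrderOf (g i)) = blockLen m' + blockLen m :=
    blockLen_add habf
  have hsum : blockLen (fun i => addOrderOf (g i)) = ∑ i, addOrderOf (g i) := rfl
  have hltm' : blockLen m' < blockLen m := by omega
  set T : Finset (Fin k → ℕ) := (Finset.univ.image s) ∪ {m'} with hT
  have hsmem : ∀ j, s j ∈ T := fun j =>
    Finset.mem_union_left _ (Finset.mem_image_of_mem s (Finset.mem_univ j))
  have hm'mem : m' ∈ T := Finset.mem_union_right _ (Finset.mem_singleton_self m')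
  apply hm.2
  refine ⟨T, fun x => (∑ j, if x = s j then (1:ℤ) else 0) - (if x = m' then 1 else 0),
    ?_, ?_⟩
  · intro x hx
    rw [hT, Finset.mem_union] at hx
    rcases hx with hx | hx
    · rw [Finset.mem_image] at hx
      obtain ⟨j, _, rfl⟩ := hx
      exact ⟨isBlock_single g j, by rw [blockLen_single]; exact hbig j⟩
    · rw [Finset.mem_singleton] at hx
      subst hx
      exact ⟨hblkm', hltm'⟩
  · intro i
    have key : ∀ y ∈ T, ∑ x ∈ T, (if x = y then (1:ℤ) else 0) * x i = y i := by
      intro y hy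
      rw [Finset.sum_eq_single y]
      · simp
      · intro x _ hxy; simp [hxy]
      · intro hyT; exact absurd hy hyT
    have step : ∑ x ∈ T, ((∑ j, if x = s j then (1:ℤ) else 0) -
        (if x = m' then 1 else 0)) * x i
        = ∑ j, ((s j i : ℕ) : ℤ) - (m' i : ℤ) := by
      rw [Finset.sum_congr rfl (fun x _ => sub_mul _ _ _), Finset.sum_sub_distrib]
      congr 1
      · rw [Finset.sum_congr rfl (fun x _ => Finset.sum_mul _ _ _), Finset.sum_comm]
        exact Finset.sum_congr rfl fun j _ => key (s j) (hsmem j)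
      · exact key m' hm'mem
    rw [step]
    have hsj : ∑ j, ((s j i : ℕ) : ℤ) = (addOrderOf (g i) : ℤ) := by
      rw [Finset.sum_eq_single i]
      · simp [hs]
      · intro j _ hji; simp [hs, Pi.single_apply, hji.symm]
      · simp
    rw [hsj]
    have : m' i = addOrderOf (g i) - m i := rfl
    rw [this]
    have := hlt i
    push_cast [Nat.cast_sub (le_of_lt (hlt i))]
    ring
end

section
/- Let g₁,…,g_k be distinct elements of a finite abelian group G, let m = [m₁,…,m_k] ∈ B(g₁,…,g_k) with mᵢ ≠ 0 for all i, and suppose there are a fixed index i ∈ {1,…,k} and an integer d such that: (i) d divides the i-th entry of every atom of B(g₁,…,g_k) whose support has size strictly smaller than k; (ii) d does not divide mᵢ; (iii) |m| is minimal among the lengths of atoms of B(g₁,…,g_k) whose support has size exactly k. Then m is a group atom in B(g₁,…,g_k). -/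
open Finset

lemma blockLen_pos_of_ne_zero {k : ℕ} {b : Fin k → ℕ} (hb : b ≠ 0) :
    0 < blockLen b := by
  rcases Function.ne_iff.mp hb with ⟨j, hj⟩
  calc 0 < b j := Nat.pos_of_ne_zero hj
    _ ≤ blockLen b := Finset.single_le_sum (fun _ _ => Nat.zero_le _) (mem_univ j)

theorem groupAtom_of_divisibility {G : Type*} [AddCommGroup G] [Fintype G]
    {k : ℕ} (g : Fin k → G) (hg : Function.Injective g)
    (m : Fin k → ℕ) (hmB : IsBlock g m) (hsupp : ∀ j, m j ≠ 0)
    (i : Fin k) (d : ℕ)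
    (h1 : ∀ a : Fin k → ℕ, IsBlockAtom g a →
      (Finset.univ.filter (fun j => a j ≠ 0)).card < k → d ∣ a i)
    (h2 : ¬ d ∣ m i)
    (h3 : ∀ a : Fin k → ℕ, IsBlockAtom g a →
      (Finset.univ.filter (fun j => a j ≠ 0)).card = k →
      blockLen m ≤ blockLen a) :
    IsGroupAtom g m := by
  -- Key: every block of length < |m| has i-th entry divisible by d.
  have key : ∀ n, ∀ b : Fin k → ℕ, blockLen b ≤ n → IsBlock g b →
      blockLen b < blockLen m → d ∣ b i := by
    intro n
    induction n with
    | zero =>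
      intro b hlen _ _
      have : b i = 0 := by
        have := Finset.sum_eq_zero_iff.mp (Nat.le_zero.mp hlen)
        exact this i (mem_univ i)
      simp [this]
    | succ n ih =>
      intro b hlen hbB hblt
      by_cases hb0 : b = 0
      · simp [hb0]
      by_cases hatom : IsBlockAtom g b
      · -- the support of b can't be all of Fin k
        have hcard : ((univ : Finset (Fin k)).filter (fun j => b j ≠ 0)).card ≤ k := by
          simpa using Finset.card_filter_le univ (fun j => b j ≠ 0)
        rcases lt_or_eq_of_le hcard with h | h
        · exact h1 b hatom h
        · exact absurd (h3 b hatom h) (by omega)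
      · -- b splits as a sum of two nonzero blocks
        have hsplit : ∃ x y : Fin k → ℕ, IsBlock g x ∧ IsBlock g y ∧ b = x + y ∧
            x ≠ 0 ∧ y ≠ 0 := by
          simp only [IsBlockAtom, not_and, not_forall] at hatom
          rcases hatom hbB hb0 with ⟨x, y, hx, hy, hxy, hne⟩
          push_neg at hne
          exact ⟨x, y, hx, hy, hxy, hne.1, hne.2⟩
        rcases hsplit with ⟨x, y, hxB, hyB, hbxy, hx0, hy0⟩
        have hadd : blockLen b = blockLen x + blockLen y := by
          simp [blockLen, hbxy, Finset.sum_add_distrib]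
        have hxp := blockLen_pos_of_ne_zero hx0
        have hyp := blockLen_pos_of_ne_zero hy0
        have dx : d ∣ x i := ih x (by omega) hxB (by omega)
        have dy : d ∣ y i := ih y (by omega) hyB (by omega)
        have : b i = x i + y i := by rw [hbxy]; rfl
        rw [this]
        exact Nat.dvd_add dx dy
  refine ⟨hmB, ?_⟩
  rintro ⟨T, c, hT, hrep⟩
  have : (d : ℤ) ∣ (m i : ℤ) := by
    rw [hrep i]
    refine Finset.dvd_sum ?_
    intro b hb
    rcases hT b hb with ⟨hbB, hblt⟩
    have : d ∣ b i := key (blockLen b) b le_rfl hbB hblt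
    exact Dvd.dvd.mul_left (Int.natCast_dvd_natCast.mpr this) _
  exact h2 (Int.natCast_dvd_natCast.mp this)
end

section
/- Let G = C_{n₁} ⊕ ⋯ ⊕ C_{n_r} with r = 2s−1 odd and 2 ≤ n_r ∣ n_{r−1} ∣ ⋯ ∣ n₁. With standard generators e₁,…,e_s of orders n₁,…,n_s and f₁,…,f_{s−1} of orders n_{s+1},…,n_{2s−1}, define g₁ = e₁, g_{2i} = eᵢ + fᵢ and g_{2i+1} = fᵢ + e_{i+1} for i = 1,…,s−1, and g_{r+1} = e_s. Then every atom m of B(g₁,…,g_{r+1}) with |supp(m)| < r+1 has all its coordinates divisible by n_r. -/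
open Finset

/-- The zigzag elements `g₁,…,g_{r+1}` (0-indexed) in
`G = C_{n₁} ⊕ ⋯ ⊕ C_{n_{2s-1}}`: `g₁ = e₁`, `g_{2i} = eᵢ + fᵢ`,
`g_{2i+1} = fᵢ + e_{i+1}` for `i = 1,…,s-1`, and `g_{2s} = e_s`.
Coordinates `0,…,s-1` correspond to `e₁,…,e_s` and coordinates
`s,…,2s-2` to `f₁,…,f_{s-1}`. -/
def zigzagOdd (s : ℕ) (n : Fin (2*s-1) → ℕ) :
    Fin (2*s) → ∀ c : Fin (2*s-1), ZMod (n c) :=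
  fun t => fun c =>
    if c.val = t.val / 2 then 1
    else if 1 ≤ t.val ∧ t.val ≤ 2*s-2 ∧ c.val = s + (t.val - 1)/2 then 1
    else 0

theorem zigzagOdd_atom_coords_div (s : ℕ) (hs : 1 ≤ s)
    (n : Fin (2*s-1) → ℕ)
    (hdvd : ∀ i j : Fin (2*s-1), i ≤ j → n j ∣ n i)
    (h2 : 2 ≤ n ⟨2*s-2, by omega⟩)
    (m : Fin (2*s) → ℕ) (hm : IsBlockAtom (zigzagOdd s n) m)
    (hsupp : (Finset.univ.filter (fun i => m i ≠ 0)).card < 2*s) :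
    ∀ i, n ⟨2*s-2, by omega⟩ ∣ m i := by
  obtain ⟨hblock, -, -⟩ := hm
  set q : ℕ := n ⟨2*s-2, by omega⟩ with hq
  -- Every coordinate index of G is divisible by q.
  have hqdvd : ∀ c : Fin (2*s-1), q ∣ n c := by
    intro c
    exact hdvd c ⟨2*s-2, by omega⟩ (by
      rw [Fin.le_def]
      simp only
      omega)
  -- adjacency: q divides the sum of adjacent coordinates of m
  have key' : ∀ a b : Fin (2*s), b.val = a.val + 1 → q ∣ m a + m b := by
    intro a b hvab
    have ht0 : a.val + 1 < 2*s := by omega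
    have hc : ∃ c : Fin (2*s-1), ∀ t : Fin (2*s),
        zigzagOdd s n t c = if t.val = a.val ∨ t.val = b.val then 1 else 0 := by
      rcases Nat.even_or_odd a.val with he | ho
      · obtain ⟨u, hu⟩ := he
        refine ⟨⟨a.val/2, by omega⟩, fun t => ?_⟩
        have ht := t.isLt
        unfold zigzagOdd
        simp only
        split_ifs with hA hB hC hC <;> first | (exfalso; omega) | rfl
      · obtain ⟨u, hu⟩ := ho
        refine ⟨⟨s + (a.val-1)/2, by omega⟩, fun t => ?_⟩
        have ht := t.isLt
        unfold zigzagOdd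
        simp only
        split_ifs with hA hB hC hC <;> first | (exfalso; omega) | rfl
    obtain ⟨c, hgc⟩ := hc
    have h00 := congrFun hblock c
    rw [Finset.sum_apply] at h00
    simp only [Pi.smul_apply, Pi.zero_apply] at h00
    have hab : a ≠ b := by
      intro h; rw [h] at hvab; omega
    have haa : a.val = a.val ∨ a.val = b.val := Or.inl rfl
    have hbb : b.val = a.val ∨ b.val = b.val := Or.inr rfl
    have hz : ∀ x ∈ (Finset.univ : Finset (Fin (2*s))),
        x ∉ ({a, b} : Finset (Fin (2*s))) → m x • zigzagOdd s n x c = 0 := by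
      intro x _ hx
      simp only [Finset.mem_insert, Finset.mem_singleton] at hx
      push_neg at hx
      have hx1 : ¬ (x.val = a.val ∨ x.val = b.val) := by
        rintro (h | h)
        · exact hx.1 (Fin.ext h)
        · exact hx.2 (Fin.ext h)
      rw [hgc x, if_neg hx1, smul_zero]
    rw [← Finset.sum_subset (Finset.subset_univ ({a, b} : Finset (Fin (2*s)))) hz,
      Finset.sum_pair hab, hgc a, hgc b, if_pos haa, if_pos hbb] at h00
    simp only [nsmul_eq_mul, mul_one] at h00
    have hcast : ((m a + m b : ℕ) : ZMod (n c)) = 0 := by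
      push_cast
      exact h00
    exact dvd_trans (hqdvd c)
      ((CharP.cast_eq_zero_iff (ZMod (n c)) (n c) (m a + m b)).mp hcast)
  -- some coordinate of m is zero
  have hzero : ∃ i0 : Fin (2*s), m i0 = 0 := by
    by_contra h
    push_neg at h
    have : (Finset.univ.filter (fun i => m i ≠ 0)) = Finset.univ := by
      apply Finset.filter_true_of_mem
      intro i _
      exact h i
    rw [this, Finset.card_univ, Fintype.card_fin] at hsupp
    omega
  obtain ⟨i0, hi0⟩ := hzero
  have hdvd0 : q ∣ m i0 := by rw [hi0]; exact dvd_zero q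
  -- spread upward
  have up : ∀ d : ℕ, ∀ h : i0.val + d < 2*s, q ∣ m ⟨i0.val + d, h⟩ := by
    intro d
    induction d with
    | zero =>
      intro h
      have : (⟨i0.val + 0, h⟩ : Fin (2*s)) = i0 := Fin.ext (by simp <;> omega)
      rw [this]; exact hdvd0
    | succ d ih =>
      intro h
      have hprev := ih (by omega)
      have hk := key' ⟨i0.val + d, by omega⟩ ⟨i0.val + (d+1), h⟩ (by simp <;> omega)
      have := Nat.dvd_sub hk hprev
      simpa using this
  -- spread downward
  have down : ∀ d : ℕ, d ≤ i0.val → q ∣ m ⟨i0.val - d, by omega⟩ := by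
    intro d
    induction d with
    | zero =>
      intro _
      have : (⟨i0.val - 0, by omega⟩ : Fin (2*s)) = i0 := Fin.ext (by simp <;> omega)
      rw [this]; exact hdvd0
    | succ d ih =>
      intro h
      have hprev := ih (by omega)
      have hk := key' ⟨i0.val - (d+1), by omega⟩ ⟨i0.val - d, by omega⟩ (by simp <;> omega)
      have := Nat.dvd_sub hk hprev
      simpa using this
  intro i
  rcases le_or_gt i.val i0.val with hle | hlt
  · have := down (i0.val - i.val) (by omega)
    have hi : (⟨i0.val - (i0.val - i.val), by omega⟩ : Fin (2*s)) = i := Fin.ext (by simp <;> omega)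
    rwa [hi] at this
  · have := up (i.val - i0.val) (by omega)
    have hi : (⟨i0.val + (i.val - i0.val), by omega⟩ : Fin (2*s)) = i := Fin.ext (by simp <;> omega)
    rwa [hi] at this
end

section
/- Let r = 2s be even, G = C_{n₁} ⊕ ⋯ ⊕ C_{n_r} with 2 ≤ n_r ∣ ⋯ ∣ n₁, and let p be a prime divisor of n_r. With standard generators e₁,…,e_s (orders n₁,…,n_s) and f₁,…,f_s (orders n_{s+1},…,n_{2s}), define g₁ = e₁ − (n_{s+1}/p)f₁, g_{2i} = eᵢ + f_{i+1} and g_{2i+1} = f_{i+1} + e_{i+1} for i = 1,…,s−1, g_r = e_s, g_{r+1} = f₁. Then every atom m of B(g₁,…,g_{r+1}) with |supp(m)| < r+1 has all coordinates divisible by p. -/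
open Finset

/-- The even-rank zigzag elements `g₁,…,g_{2s+1}` (0-indexed) in
`G = C_{n₁} ⊕ ⋯ ⊕ C_{n_{2s}}`: `g₁ = e₁ - (n_{s+1}/p)·f₁`,
`g_{2i} = eᵢ + f_{i+1}` and `g_{2i+1} = f_{i+1} + e_{i+1}` for
`i = 1,…,s-1`, `g_{2s} = e_s`, `g_{2s+1} = f₁`.  Coordinates `0,…,s-1`
correspond to `e₁,…,e_s` and coordinates `s,…,2s-1` to `f₁,…,f_s`. -/
def zigzagEven (s p : ℕ) (hs : 1 ≤ s) (n : Fin (2*s) → ℕ) :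
    Fin (2*s+1) → ∀ c : Fin (2*s), ZMod (n c) :=
  fun t => fun c =>
    if t.val ≤ 2*s-1 ∧ c.val = t.val / 2 then 1
    else if 1 ≤ t.val ∧ t.val ≤ 2*s-2 ∧ c.val = s + (t.val + 1) / 2 then 1
    else if t.val = 0 ∧ c.val = s then
      -((n ⟨s, by omega⟩ / p : ℕ) : ZMod (n c))
    else if t.val = 2*s ∧ c.val = s then 1
    else 0

/-!
Indices start at `0`, as in `zigzagEven`. Read coordinatewise, the block condition says that
every coordinate `c ≠ s` of `G` meets exactly two consecutive generators `g_t, g_{t+1}`, both with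
coefficient `1`, so `n_c ∣ m_t + m_{t+1}` along the zigzag `t = 0, …, 2s - 1`. Since `p` divides
every `n_c`, the residues of `m_0, …, m_{2s-1}` modulo `p` alternate in sign: `p` divides all of
them or none. The coordinate `s` (that of `f₁`) gives `m_{2s} ≡ m_0 · (n_s/p) (mod n_s)`. Hence a
vanishing coordinate forces `p ∣ m_0` (for `m_{2s} = 0`, cancel `n_s/p` in `p · n_s/p ∣ m_0 · n_s/p`),
and `p ∣ m_0` in turn gives `n_s ∣ m_{2s}`.
-/

section Block

variable {ι : Type*} {n : ι → ℕ} {k : ℕ} {g : Fin k → (c : ι) → ZMod (n c)} {m : Fin k → ℕ}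

theorem IsBlock.sum_coord_eq_zero (hm : IsBlock g m) (c : ι) :
    ∑ t, (m t : ZMod (n c)) * g t c = 0 := by
  simpa [Finset.sum_apply, nsmul_eq_mul] using congrFun hm c

theorem IsBlock.coord_mul_add_mul_eq_zero (hm : IsBlock g m) {c : ι} {a b : Fin k}
    (hab : a ≠ b) (hg : ∀ t, t ≠ a → t ≠ b → g t c = 0) :
    (m a : ZMod (n c)) * g a c + m b * g b c = 0 := by
  have h := hm.sum_coord_eq_zero c
  rwa [Fintype.sum_eq_add a b hab fun t ht => by rw [hg t ht.1 ht.2, mul_zero]] at h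

theorem IsBlock.dvd_add_of_coord_eq_one (hm : IsBlock g m) {c : ι} {a b : Fin k}
    (hab : a ≠ b) (ha : g a c = 1) (hb : g b c = 1) (hg : ∀ t, t ≠ a → t ≠ b → g t c = 0) :
    n c ∣ m a + m b := by
  have h := hm.coord_mul_add_mul_eq_zero hab hg
  rw [ha, hb, mul_one, mul_one] at h
  exact (ZMod.natCast_eq_zero_iff _ _).1 (by push_cast; exact h)

end Block

theorem exists_eq_zero_of_card_support_lt {α M : Type*} [Fintype α] [Zero M] [DecidableEq M]
    {f : α → M} (h : (univ.filter fun a => f a ≠ 0).card < Fintype.card α) : ∃ a, f a = 0 := by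
  by_contra! hf
  rw [filter_true_of_mem fun a _ => hf a] at h
  exact h.ne rfl

theorem dvd_iff_of_forall_dvd_add_succ {p k L : ℕ} (hL : L < k) {f : Fin k → ℕ}
    (h : ∀ t (ht : t < L), p ∣ f ⟨t, by omega⟩ + f ⟨t + 1, by omega⟩) :
    ∀ t (ht : t ≤ L), (p ∣ f ⟨0, by omega⟩ ↔ p ∣ f ⟨t, by omega⟩)
  | 0, _ => Iff.rfl
  | t + 1, ht =>
    have hsum := h t ht
    (dvd_iff_of_forall_dvd_add_succ hL h t (by omega)).trans
      ⟨fun h1 => (Nat.dvd_add_right h1).1 hsum, fun h2 => (Nat.dvd_add_left h2).1 hsum⟩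

theorem dvd_of_natCast_eq_mul_div {p N a b : ℕ} (hpN : p ∣ N)
    (h : (b : ZMod N) = a * (N / p : ℕ)) (ha : p ∣ a) : p ∣ b := by
  obtain ⟨a, rfl⟩ := ha
  have hb : (b : ZMod N) = 0 := by
    rw [h, ← Nat.cast_mul, mul_comm p, mul_assoc, Nat.mul_div_cancel' hpN, Nat.cast_mul,
      ZMod.natCast_self, mul_zero]
  exact hpN.trans ((ZMod.natCast_eq_zero_iff _ _).1 hb)

theorem dvd_of_natCast_mul_div_eq_zero {p N a : ℕ} (hpN : p ∣ N) (hN : N ≠ 0)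
    (h : (a * (N / p : ℕ) : ZMod N) = 0) : p ∣ a := by
  have hq : N / p ≠ 0 := fun hq => hN (by rw [← Nat.mul_div_cancel' hpN, hq, mul_zero])
  refine Nat.dvd_of_mul_dvd_mul_right (Nat.pos_of_ne_zero hq) ?_
  rw [Nat.mul_div_cancel' hpN, ← ZMod.natCast_eq_zero_iff]
  exact_mod_cast h

section Zigzag

variable {s p : ℕ} {hs : 1 ≤ s} {n : Fin (2 * s) → ℕ} {m : Fin (2 * s + 1) → ℕ}

theorem zigzagEven_dvd_add_even (hm : IsBlock (zigzagEven s p hs n) m) {c : ℕ} (hc : c < s) :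
    n ⟨c, by omega⟩ ∣ m ⟨2 * c, by omega⟩ + m ⟨2 * c + 1, by omega⟩ := by
  apply hm.dvd_add_of_coord_eq_one
  · simp
  · simp only [zigzagEven]; split_ifs <;> first | rfl | omega
  · simp only [zigzagEven]; split_ifs <;> first | rfl | omega
  · rintro ⟨t, ht⟩ h1 h2
    simp only [ne_eq, Fin.mk.injEq] at h1 h2
    simp only [zigzagEven]; split_ifs <;> first | rfl | omega

theorem zigzagEven_dvd_add_odd (hm : IsBlock (zigzagEven s p hs n) m) {j : ℕ} (hj : j + 1 < s) :
    n ⟨s + j + 1, by omega⟩ ∣ m ⟨2 * j + 1, by omega⟩ + m ⟨2 * j + 2, by omega⟩ := by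
  apply hm.dvd_add_of_coord_eq_one
  · simp
  · simp only [zigzagEven]; split_ifs <;> first | rfl | omega
  · simp only [zigzagEven]; split_ifs <;> first | rfl | omega
  · rintro ⟨t, ht⟩ h1 h2
    simp only [ne_eq, Fin.mk.injEq] at h1 h2
    simp only [zigzagEven]; split_ifs <;> first | rfl | omega

theorem zigzagEven_natCast_last (hm : IsBlock (zigzagEven s p hs n) m) :
    (m (Fin.last (2 * s)) : ZMod (n ⟨s, by omega⟩)) = m 0 * (n ⟨s, by omega⟩ / p : ℕ) := by
  have hne : (0 : Fin (2 * s + 1)) ≠ Fin.last (2 * s) := by simp [Fin.ext_iff]; omega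
  have h := hm.coord_mul_add_mul_eq_zero (c := ⟨s, by omega⟩) hne fun ⟨t, ht⟩ h1 h2 => by
    simp only [ne_eq, Fin.ext_iff, Fin.val_zero, Fin.val_last] at h1 h2
    simp only [zigzagEven]; split_ifs <;> first | rfl | omega
  have h0 : zigzagEven s p hs n 0 ⟨s, by omega⟩ = -(n ⟨s, by omega⟩ / p : ℕ) := by
    simp [zigzagEven]; omega
  have hlast : zigzagEven s p hs n (Fin.last (2 * s)) ⟨s, by omega⟩ = 1 := by
    simp [zigzagEven]; omega
  rw [h0, hlast] at h
  linear_combination h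

theorem zigzagEven_dvd_add_succ (hm : IsBlock (zigzagEven s p hs n) m) (hpn : ∀ c, p ∣ n c)
    {t : ℕ} (ht : t + 1 < 2 * s) : p ∣ m ⟨t, by omega⟩ + m ⟨t + 1, by omega⟩ := by
  obtain ⟨c, rfl | rfl⟩ := Nat.even_or_odd' t
  · exact (hpn _).trans (zigzagEven_dvd_add_even hm (by omega))
  · exact (hpn _).trans (zigzagEven_dvd_add_odd hm (by omega))

theorem zigzagEven_dvd_apply_zero_iff (hm : IsBlock (zigzagEven s p hs n) m) (hpn : ∀ c, p ∣ n c)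
    {i : Fin (2 * s + 1)} (hi : i ≠ Fin.last (2 * s)) : p ∣ m 0 ↔ p ∣ m i :=
  dvd_iff_of_forall_dvd_add_succ (L := 2 * s - 1) (by omega)
    (fun _ ht => zigzagEven_dvd_add_succ hm hpn (by omega)) i (by have := Fin.val_lt_last hi; omega)

theorem zigzagEven_dvd_apply_zero (hm : IsBlock (zigzagEven s p hs n) m)
    (hdvd : ∀ i j : Fin (2 * s), i ≤ j → n j ∣ n i) (hpn : ∀ c, p ∣ n c) {t : Fin (2 * s + 1)}
    (ht : m t = 0) : p ∣ m 0 := by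
  by_cases hlast : t = Fin.last (2 * s)
  · subst hlast
    have hcoord := zigzagEven_natCast_last hm
    rw [ht, Nat.cast_zero, eq_comm] at hcoord
    by_cases hN : n ⟨s, by omega⟩ = 0
    · have hN0 : n ⟨0, by omega⟩ = 0 := by
        have := hdvd ⟨0, by omega⟩ ⟨s, by omega⟩ (Fin.mk_le_mk.2 s.zero_le)
        rwa [hN, zero_dvd_iff] at this
      have h01 := zigzagEven_dvd_add_even hm (c := 0) (by omega)
      rw [hN0, zero_dvd_iff, Nat.add_eq_zero_iff] at h01
      have hm0 : m 0 = 0 := h01.1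
      rw [hm0]
      exact dvd_zero p
    · exact dvd_of_natCast_mul_div_eq_zero (hpn _) hN (by exact_mod_cast hcoord)
  · exact (zigzagEven_dvd_apply_zero_iff hm hpn hlast).2 (ht ▸ dvd_zero p)

end Zigzag

theorem zigzagEven_atom_coords_div (s p : ℕ) (hs : 1 ≤ s)
    (n : Fin (2*s) → ℕ)
    (hdvd : ∀ i j : Fin (2*s), i ≤ j → n j ∣ n i)
    (hpn : p ∣ n ⟨2*s-1, by omega⟩)
    (m : Fin (2*s+1) → ℕ) (hm : IsBlockAtom (zigzagEven s p hs n) m)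
    (hsupp : (Finset.univ.filter (fun i => m i ≠ 0)).card < 2*s+1) :
    ∀ i, p ∣ m i := by
  have hblock := hm.1
  have hp : ∀ c, p ∣ n c := fun c => hpn.trans (hdvd c _ (Fin.mk_le_mk.2 (by omega)))
  obtain ⟨t, ht⟩ := exists_eq_zero_of_card_support_lt (f := m) (by rwa [Fintype.card_fin])
  have h0 := zigzagEven_dvd_apply_zero hblock hdvd hp ht
  intro i
  by_cases hi : i = Fin.last (2 * s)
  · subst hi
    exact dvd_of_natCast_eq_mul_div (hp _) (zigzagEven_natCast_last hblock) h0
  · exact (zigzagEven_dvd_apply_zero_iff hblock hp hi).1 h0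
end

section
/- Let G be a finite abelian group, let g₁,…,g_k be distinct elements of G, and let m ∈ B(g₁,…,g_k). Suppose ℓ is a positive integer coprime to the exponent of G, and define m_ℓ by taking m_{ℓ,i} to be the unique residue of ℓ·mᵢ in {0,1,…,ord(gᵢ)−1}. Then m_ℓ ∈ B(g₁,…,g_k), and m can be written as an integral linear combination of m_ℓ and the elements ord(gᵢ)·eᵢ (i = 1,…,k) of B(g₁,…,g_k). -/
open Finset

theorem scaled_block_and_combination {G : Type*} [AddCommGroup G] [Fintype G]
    {k : ℕ} (g : Fin k → G) (hg : Function.Injective g)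
    (m : Fin k → ℕ) (hm : IsBlock g m)
    (ℓ : ℕ) (hℓ : 0 < ℓ) (hcop : Nat.Coprime ℓ (AddMonoid.exponent G)) :
    IsBlock g (fun i => (ℓ * m i) % addOrderOf (g i)) ∧
    ∃ (c : ℤ) (t : Fin k → ℤ), ∀ i,
      (m i : ℤ) = c * ((ℓ * m i) % addOrderOf (g i) : ℕ)
        + t i * (addOrderOf (g i) : ℤ) := by
  have hm' : ∑ i, (m i) • g i = 0 := hm

  constructor
  · show ∑ i, ((ℓ * m i) % addOrderOf (g i)) • g i = 0
    calc ∑ i, ((ℓ * m i) % addOrderOf (g i)) • g i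
        = ∑ i, (ℓ * m i) • g i :=
          Finset.sum_congr rfl fun i _ => mod_addOrderOf_nsmul (g i) (ℓ * m i)
      _ = ℓ • ∑ i, m i • g i := by
          rw [Finset.smul_sum]; exact Finset.sum_congr rfl fun i _ => mul_nsmul' (g i) ℓ (m i)
      _ = 0 := by rw [hm, smul_zero]
  · obtain ⟨u, v, huv⟩ := (Nat.isCoprime_iff_coprime.mpr hcop :
      IsCoprime (ℓ : ℤ) (AddMonoid.exponent G : ℤ))
    have hdvd : ∀ i, (addOrderOf (g i) : ℤ) ∣
        (m i : ℤ) - u * ((ℓ * m i) % addOrderOf (g i) : ℕ) := by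
      intro i
      have h1 : (addOrderOf (g i) : ℤ) ∣ (AddMonoid.exponent G : ℤ) :=
        Int.natCast_dvd_natCast.mpr (AddMonoid.addOrder_dvd_exponent (g i))
      have h2 : ((ℓ * m i) % addOrderOf (g i) : ℤ) ≡ (ℓ : ℤ) * m i [ZMOD (addOrderOf (g i))] := by
        have h3 := Int.natCast_modEq_iff.mpr (Nat.mod_modEq (ℓ * m i) (addOrderOf (g i)))
        exact_mod_cast h3
      have h4 : (m i : ℤ) - u * ((ℓ * m i) % addOrderOf (g i) : ℕ) ≡
          (m i : ℤ) - u * ((ℓ : ℤ) * m i) [ZMOD (addOrderOf (g i))] :=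
        (Int.ModEq.refl _).sub ((Int.ModEq.refl u).mul h2)
      have h5 : (m i : ℤ) - u * ((ℓ : ℤ) * m i) = (v * m i) * (AddMonoid.exponent G : ℤ) := by
        nlinarith [huv]
      have h6 : (m i : ℤ) - u * ((ℓ * m i) % addOrderOf (g i) : ℕ) ≡ 0 [ZMOD (addOrderOf (g i))] :=
        h4.trans (Int.modEq_zero_iff_dvd.mpr (h5 ▸ Dvd.dvd.mul_left h1 _))
      exact Int.modEq_zero_iff_dvd.mp h6
    refine ⟨u, fun i => ((m i : ℤ) - u * ((ℓ * m i) % addOrderOf (g i) : ℕ)) / addOrderOf (g i),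
      fun i => ?_⟩
    rw [Int.ediv_mul_cancel (hdvd i)]
    ring
end
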